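/- arXiv:2005.10763 — 7 statements merged into one kernel-verified Lean document; each statement's English description precedes it below -/
import Mathlib

section
/- Let m ≥ 1, ε ∈ {1, −1}, and let Q(z) be a monic polynomial of degree m with real coefficients all of whose roots lie strictly inside the open unit disk. Define P(z) = z^m·Q(z) + ε·Q*(z), where Q*(z) = z^m·Q(1/z) is the reciprocal polynomial (with conjugated coefficients, which are real here). Then all roots of P lie on the unit circle |z| = 1. -/
/-! Over ℂ, `Q = ∏ (X - α)` with all `‖α‖ < 1`, and since `Q` is real its roots are stable under
conjugation, so `‖Q*(z)‖ = ∏ ‖1 - conj α * z‖` while `‖z ^ m * Q(z)‖ = ∏ ‖z‖ * ‖z - α‖`. A root `z`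
of `P` makes these two products equal. The Blaschke identity
`‖1 - conj α * z‖² - ‖z - α‖² = (1 - ‖α‖²) (1 - ‖z‖²)` makes every factor of the second product
strictly smaller than the matching factor of the first when `‖z‖ < 1`, and strictly larger when
`‖z‖ > 1`; as `m ≥ 1` there is at least one factor, so `‖z‖ = 1`. -/

open Polynomial ComplexConjugate

namespace Multiset

theorem prod_map_lt_prod_map_of_nonneg {ι R : Type*} [CommSemiring R] [PartialOrder R]
    [IsStrictOrderedRing R] {s : Multiset ι} (hs : s ≠ 0) (f g : ι → R)
    (h0 : ∀ i ∈ s, 0 ≤ f i) (h : ∀ i ∈ s, f i < g i) :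
    (s.map f).prod < (s.map g).prod := by
  induction s using Multiset.induction with
  | empty => contradiction
  | cons a t ih =>
    simp only [map_cons, prod_cons]
    rcases eq_or_ne t 0 with rfl | ht
    · simpa using h a (mem_cons_self a 0)
    · exact mul_lt_mul'' (h a (mem_cons_self a t))
        (ih ht (fun i hi => h0 i (mem_cons_of_mem hi)) (fun i hi => h i (mem_cons_of_mem hi)))
        (h0 a (mem_cons_self a t)) (prod_map_nonneg fun i hi => h0 i (mem_cons_of_mem hi))

end Multiset

namespace Polynomial

theorem reverse_one {R : Type*} [Semiring R] : (1 : R[X]).reverse = 1 := by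
  simpa using reverse_C (1 : R)

theorem reverse_X_sub_C {R : Type*} [Ring R] [Nontrivial R] (a : R) :
    (X - C a).reverse = 1 - C a * X := by
  have hX : (X : R[X]).reverse = 1 := by
    simpa [reverse_one] using reverse_X_mul (1 : R[X])
  simpa [sub_eq_add_neg, hX] using reverse_add_C (X : R[X]) (-a)

theorem reverse_multiset_prod {R : Type*} [CommSemiring R] [NoZeroDivisors R]
    (s : Multiset R[X]) : s.prod.reverse = (s.map reverse).prod := by
  induction s using Multiset.induction with
  | empty => exact reverse_one
  | cons p s ih => simp [reverse_mul_of_domain, ih]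

theorem reverse_map {R S : Type*} [Semiring R] [Semiring S] {f : R →+* S}
    (hf : Function.Injective f) (p : R[X]) : (p.map f).reverse = p.reverse.map f := by
  rw [reverse, reverse, natDegree_map_eq_of_injective hf, reflect_map]

end Polynomial

namespace Complex

theorem normSq_one_sub_conj_mul_sub_normSq_sub (α z : ℂ) :
    normSq (1 - conj α * z) - normSq (z - α) = (1 - normSq α) * (1 - normSq z) := by
  simp only [normSq_apply, sub_re, sub_im, mul_re, mul_im, one_re, one_im, conj_re, conj_im]
  ring

theorem norm_sub_lt_norm_one_sub_conj_mul {α z : ℂ} (hα : ‖α‖ < 1) (hz : ‖z‖ < 1) :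
    ‖z - α‖ < ‖1 - conj α * z‖ := by
  rw [← sq_lt_sq₀ (norm_nonneg _) (norm_nonneg _), Complex.sq_norm, Complex.sq_norm,
    ← sub_pos, normSq_one_sub_conj_mul_sub_normSq_sub]
  have hα' := (sq_lt_one_iff₀ (norm_nonneg α)).2 hα
  have hz' := (sq_lt_one_iff₀ (norm_nonneg z)).2 hz
  rw [Complex.sq_norm] at hα' hz'
  exact mul_pos (sub_pos.2 hα') (sub_pos.2 hz')

theorem norm_one_sub_conj_mul_lt_norm_sub {α z : ℂ} (hα : ‖α‖ < 1) (hz : 1 < ‖z‖) :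
    ‖1 - conj α * z‖ < ‖z - α‖ := by
  rw [← sq_lt_sq₀ (norm_nonneg _) (norm_nonneg _), Complex.sq_norm, Complex.sq_norm,
    ← sub_neg, normSq_one_sub_conj_mul_sub_normSq_sub]
  have hα' := (sq_lt_one_iff₀ (norm_nonneg α)).2 hα
  rw [Complex.sq_norm] at hα'
  exact mul_neg_of_pos_of_neg (sub_pos.2 hα') (sub_neg.2 (one_lt_normSq_iff.2 hz))

theorem norm_mul_norm_sub_lt_norm_one_sub_conj_mul {α z : ℂ} (hα : ‖α‖ < 1) (hz : ‖z‖ < 1) :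
    ‖z‖ * ‖z - α‖ < ‖1 - conj α * z‖ :=
  calc ‖z‖ * ‖z - α‖ ≤ ‖z - α‖ := mul_le_of_le_one_left (norm_nonneg _) hz.le
    _ < ‖1 - conj α * z‖ := norm_sub_lt_norm_one_sub_conj_mul hα hz

theorem norm_one_sub_conj_mul_lt_norm_mul_norm_sub {α z : ℂ} (hα : ‖α‖ < 1) (hz : 1 < ‖z‖) :
    ‖1 - conj α * z‖ < ‖z‖ * ‖z - α‖ :=
  calc ‖1 - conj α * z‖ < ‖z - α‖ := norm_one_sub_conj_mul_lt_norm_sub hα hz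
    _ ≤ ‖z‖ * ‖z - α‖ := le_mul_of_one_le_left (norm_nonneg _) hz.le

theorem norm_multiset_prod_map {ι : Type*} (s : Multiset ι) (f : ι → ℂ) :
    ‖(s.map f).prod‖ = (s.map fun i => ‖f i‖).prod := by
  rw [← normHom_apply, map_multiset_prod, Multiset.map_map]
  rfl

end Complex

namespace Polynomial

theorem map_conj_aroots (Q : ℝ[X]) : (Q.aroots ℂ).map conj = Q.aroots ℂ := by
  have hreal : (Q.map (algebraMap ℝ ℂ)).map (conj : ℂ →+* ℂ) = Q.map (algebraMap ℝ ℂ) := by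
    rw [map_map]
    congr 1
    ext x
    simp
  rw [aroots_def, ← (IsAlgClosed.splits _).roots_map_of_injective (star_injective), hreal]

theorem aeval_reverse_eq_prod_aroots {Q : ℝ[X]} (hQ : Q.Monic) (z : ℂ) :
    aeval z Q.reverse = ((Q.aroots ℂ).map fun α => 1 - α * z).prod := by
  rw [aeval_def, ← eval_map, ← reverse_map (algebraMap ℝ ℂ).injective,
    (IsAlgClosed.splits _).eq_prod_roots_of_monic (hQ.map _), reverse_multiset_prod,
    eval_multiset_prod, Multiset.map_map, Multiset.map_map, aroots_def]
  congr 1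
  apply Multiset.map_congr rfl
  intro α _
  simp [reverse_X_sub_C]

theorem norm_aeval_reverse_eq_prod_aroots {Q : ℝ[X]} (hQ : Q.Monic) (z : ℂ) :
    ‖aeval z Q.reverse‖ = ((Q.aroots ℂ).map fun α => ‖1 - conj α * z‖).prod := by
  rw [aeval_reverse_eq_prod_aroots hQ, Complex.norm_multiset_prod_map]
  conv_lhs => rw [← map_conj_aroots Q, Multiset.map_map]
  rfl

theorem norm_X_pow_mul_aeval_eq_prod_aroots {Q : ℝ[X]} (hQ : Q.Monic) (z : ℂ) :
    ‖z ^ Q.natDegree * aeval z Q‖ = ((Q.aroots ℂ).map fun α => ‖z‖ * ‖z - α‖).prod := by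
  rw [(IsAlgClosed.splits _).aeval_eq_prod_aroots_of_monic hQ, norm_mul, norm_pow,
    Complex.norm_multiset_prod_map, Multiset.prod_map_mul, Multiset.map_const',
    Multiset.prod_replicate, IsAlgClosed.card_aroots_eq_natDegree]

end Polynomial

/-- Cohn-type criterion (sufficiency): if Q is a monic real polynomial of degree m ≥ 1
with all complex roots strictly inside the unit disk and ε = ±1, then all complex roots of
P(z) = z^m·Q(z) + ε·Q*(z) lie on the unit circle, where Q* is the reciprocal polynomial. -/
theorem stmt_6 (m : ℕ) (hm : 1 ≤ m) (ε : ℝ) (hε : ε = 1 ∨ ε = -1)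
    (Q : Polynomial ℝ) (hQmonic : Q.Monic) (hQdeg : Q.natDegree = m)
    (hroots : ∀ z : ℂ, Polynomial.aeval z Q = 0 → ‖z‖ < 1) :
    ∀ z : ℂ,
      Polynomial.aeval z (Polynomial.X ^ m * Q + Polynomial.C ε * Q.reverse) = 0 →
        ‖z‖ = 1 := by
  subst hQdeg
  intro z hz
  have hS : Q.aroots ℂ ≠ 0 := by
    rw [← Multiset.card_pos, IsAlgClosed.card_aroots_eq_natDegree]
    omega
  have hS_disk : ∀ α ∈ Q.aroots ℂ, ‖α‖ < 1 := fun α hα => hroots α (mem_aroots.1 hα).2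
  have hnorm : ‖z ^ Q.natDegree * aeval z Q‖ = ‖aeval z Q.reverse‖ := by
    simp only [map_add, map_mul, map_pow, aeval_X, aeval_C] at hz
    rw [eq_neg_of_add_eq_zero_left hz, norm_neg, norm_mul]
    rcases hε with rfl | rfl <;> simp
  rw [norm_X_pow_mul_aeval_eq_prod_aroots hQmonic,
    norm_aeval_reverse_eq_prod_aroots hQmonic] at hnorm
  rcases lt_trichotomy ‖z‖ 1 with hz1 | hz1 | hz1
  · refine absurd hnorm (Multiset.prod_map_lt_prod_map_of_nonneg hS _ _
      (fun _ _ => by positivity) fun α hα => ?_).ne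
    exact Complex.norm_mul_norm_sub_lt_norm_one_sub_conj_mul (hS_disk α hα) hz1
  · exact hz1
  · refine absurd hnorm (Multiset.prod_map_lt_prod_map_of_nonneg hS _ _
      (fun _ _ => by positivity) fun α hα => ?_).ne'
    exact Complex.norm_one_sub_conj_mul_lt_norm_mul_norm_sub (hS_disk α hα) hz1
end

section
/- For every real number x ≥ 1, ζ(3/2 + x)² ≤ (8/5)·2^{−x} + 1, where ζ is the Riemann zeta function. -/
/-- The Riemann zeta function on real arguments s > 1, given by its Dirichlet series. -/
noncomputable def realZeta (s : ℝ) : ℝ := ∑' n : ℕ, ((n : ℝ) + 1) ^ (-s)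

/-!
Both `ζ(s)` and `2 ^ s (ζ(s) - 1) = ∑_{n ≥ 2} (2 / n) ^ s` decrease in `s`, hence so does
`2 ^ s (ζ(s) ^ 2 - 1) = 2 ^ s (ζ(s) - 1) (ζ(s) + 1)`. This reduces the inequality to `s = 5 / 2`,
where it reads `ζ(5/2) ^ 2 ≤ 9 / 5`. That is checked numerically from the first thirty terms of the
series, with the tail bounded by the telescoping estimate `(s - 1) n ^ (-s) ≤ (n - 1) ^ (1 - s) - n ^ (1 - s)`
(Bernoulli's inequality).
-/

open Real Finset Set

lemma summable_rpow_neg_nat_add {s : ℝ} (hs : 1 < s) (k : ℕ) :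
    Summable fun n : ℕ => ((n : ℝ) + k) ^ (-s) := by
  have h := (summable_nat_add_iff k).mpr (Real.summable_nat_rpow.mpr (by linarith : -s < -1))
  simpa only [Nat.cast_add] using h

lemma realZeta_antitoneOn : AntitoneOn realZeta (Ioi 1) := by
  intro s hs t ht hst
  refine Summable.tsum_le_tsum (fun n => ?_) (by simpa using summable_rpow_neg_nat_add ht 1)
    (by simpa using summable_rpow_neg_nat_add hs 1)
  exact rpow_le_rpow_of_exponent_le (by linarith [n.cast_nonneg (α := ℝ)]) (by linarith)

lemma two_div_nat_add_two_rpow (s : ℝ) (n : ℕ) :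
    (2 / ((n : ℝ) + 2)) ^ s = 2 ^ s * ((n : ℝ) + 2) ^ (-s) := by
  have hn : (0 : ℝ) < n + 2 := by positivity
  rw [div_rpow zero_le_two hn.le, div_eq_mul_inv, ← rpow_neg hn.le]

lemma summable_two_div_nat_add_two_rpow {s : ℝ} (hs : 1 < s) :
    Summable fun n : ℕ => (2 / ((n : ℝ) + 2)) ^ s := by
  simpa only [two_div_nat_add_two_rpow, Nat.cast_ofNat] using
    (summable_rpow_neg_nat_add hs 2).mul_left (2 ^ s)

lemma two_rpow_mul_realZeta_sub_one {s : ℝ} (hs : 1 < s) :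
    2 ^ s * (realZeta s - 1) = ∑' n : ℕ, (2 / ((n : ℝ) + 2)) ^ s := by
  have hsum : Summable fun n : ℕ => ((n : ℝ) + 1) ^ (-s) := by
    simpa using summable_rpow_neg_nat_add hs 1
  rw [realZeta, hsum.tsum_eq_zero_add]
  simp only [Nat.cast_zero, zero_add, one_rpow, add_sub_cancel_left, two_div_nat_add_two_rpow,
    tsum_mul_left, Nat.cast_add, Nat.cast_one, add_assoc, one_add_one_eq_two]

lemma antitoneOn_two_rpow_mul_realZeta_sub_one :
    AntitoneOn (fun s => 2 ^ s * (realZeta s - 1)) (Ioi 1) := by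
  intro s hs t ht hst
  simp only [two_rpow_mul_realZeta_sub_one hs, two_rpow_mul_realZeta_sub_one ht]
  refine Summable.tsum_le_tsum (fun n => ?_) (summable_two_div_nat_add_two_rpow ht)
    (summable_two_div_nat_add_two_rpow hs)
  exact rpow_le_rpow_of_exponent_ge (by positivity)
    ((div_le_one (by positivity)).mpr (by linarith [n.cast_nonneg (α := ℝ)])) hst

lemma one_le_realZeta {s : ℝ} (hs : 1 < s) : 1 ≤ realZeta s := by
  have h : 0 ≤ 2 ^ s * (realZeta s - 1) := by
    rw [two_rpow_mul_realZeta_sub_one hs]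
    exact tsum_nonneg fun n => by positivity
  nlinarith [rpow_pos_of_pos two_pos s]

lemma antitoneOn_two_rpow_mul_realZeta_sq_sub_one :
    AntitoneOn (fun s => 2 ^ s * (realZeta s ^ 2 - 1)) (Ioi 1) := by
  intro s hs t ht hst
  have h₁ := antitoneOn_two_rpow_mul_realZeta_sub_one hs ht hst
  have h₂ := realZeta_antitoneOn hs ht hst
  have h₃ : 0 ≤ 2 ^ s * (realZeta s - 1) :=
    mul_nonneg (by positivity) (sub_nonneg.mpr (one_le_realZeta hs))
  calc 2 ^ t * (realZeta t ^ 2 - 1) = 2 ^ t * (realZeta t - 1) * (realZeta t + 1) := by ring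
    _ ≤ 2 ^ s * (realZeta s - 1) * (realZeta s + 1) := by
      gcongr
      linarith [one_le_realZeta ht]
    _ = 2 ^ s * (realZeta s ^ 2 - 1) := by ring

lemma rpow_neg_le_sub_rpow {s a : ℝ} (hs : 2 ≤ s) (ha : 1 < a) :
    (s - 1) * a ^ (-s) ≤ (a - 1) ^ (1 - s) - a ^ (1 - s) := by
  have ha₀ : 0 < a := by linarith
  have ha₁ : 0 < a - 1 := by linarith
  have hbernoulli : 1 + (s - 1) * (1 / (a - 1)) ≤ (1 + 1 / (a - 1)) ^ (s - 1) :=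
    one_add_mul_self_le_rpow_one_add (by linarith [one_div_pos.mpr ha₁]) (by linarith)
  have hfactor : (a - 1) ^ (1 - s) = a ^ (1 - s) * (1 + 1 / (a - 1)) ^ (s - 1) := by
    rw [show 1 + 1 / (a - 1) = a * (a - 1)⁻¹ by field_simp; ring, mul_rpow ha₀.le (by positivity),
      inv_rpow ha₁.le, ← mul_assoc, ← rpow_add ha₀, ← rpow_neg ha₁.le]
    simp
  have hpow : a ^ (1 - s) = a * a ^ (-s) := by
    rw [sub_eq_add_neg, rpow_add ha₀, rpow_one]
  calc (s - 1) * a ^ (-s) = a ^ (1 - s) * ((s - 1) / a) := by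
        rw [hpow]; field_simp
    _ ≤ a ^ (1 - s) * ((s - 1) * (1 / (a - 1))) := by
        gcongr
        rw [← div_eq_mul_one_div]
        exact div_le_div_of_nonneg_left (by linarith) ha₁ (by linarith)
    _ = a ^ (1 - s) * (1 + (s - 1) * (1 / (a - 1))) - a ^ (1 - s) := by ring
    _ ≤ a ^ (1 - s) * (1 + 1 / (a - 1)) ^ (s - 1) - a ^ (1 - s) := by gcongr
    _ = (a - 1) ^ (1 - s) - a ^ (1 - s) := by rw [hfactor]

lemma tsum_rpow_neg_nat_add_le {s : ℝ} (hs : 2 ≤ s) {N : ℕ} (hN : 0 < N) :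
    ∑' n : ℕ, ((n : ℝ) + N + 1) ^ (-s) ≤ (N : ℝ) ^ (1 - s) / (s - 1) := by
  refine Real.tsum_le_of_sum_range_le (fun n => by positivity) fun k => ?_
  have hN' : (1 : ℝ) ≤ N := by exact_mod_cast hN
  have hterm : ∀ n ∈ range k, ((n : ℝ) + N + 1) ^ (-s) ≤
      (((n : ℝ) + N) ^ (1 - s) - ((n + 1 : ℕ) + (N : ℝ)) ^ (1 - s)) / (s - 1) := by
    intro n _
    rw [le_div_iff₀ (by linarith), mul_comm]
    have h := rpow_neg_le_sub_rpow hs (a := (n : ℝ) + N + 1) (by linarith [n.cast_nonneg (α := ℝ)])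
    rw [add_sub_cancel_right] at h
    simpa only [Nat.cast_add, Nat.cast_one, add_right_comm _ (1 : ℝ)] using h
  calc ∑ n ∈ range k, ((n : ℝ) + N + 1) ^ (-s)
      ≤ ∑ n ∈ range k, (((n : ℝ) + N) ^ (1 - s) - ((n + 1 : ℕ) + (N : ℝ)) ^ (1 - s)) / (s - 1) :=
        sum_le_sum hterm
    _ = ((N : ℝ) ^ (1 - s) - ((k : ℝ) + N) ^ (1 - s)) / (s - 1) := by
        rw [← sum_div, sum_range_sub' (fun n : ℕ => ((n : ℝ) + N) ^ (1 - s))]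
        simp
    _ ≤ (N : ℝ) ^ (1 - s) / (s - 1) := by
        gcongr
        · linarith
        · exact sub_le_self _ (by positivity)

lemma realZeta_le_sum_range_add {s : ℝ} (hs : 2 ≤ s) {N : ℕ} (hN : 0 < N) :
    realZeta s ≤ ∑ n ∈ range N, ((n : ℝ) + 1) ^ (-s) + (N : ℝ) ^ (1 - s) / (s - 1) := by
  have hsum : Summable fun n : ℕ => ((n : ℝ) + 1) ^ (-s) := by
    simpa using summable_rpow_neg_nat_add (by linarith) 1
  rw [realZeta, ← hsum.sum_add_tsum_nat_add N]
  gcongr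
  simpa only [Nat.cast_add] using tsum_rpow_neg_nat_add_le hs hN

/-- `Nat.sqrt (m * d ^ 2) / d` is `√m` rounded down to a multiple of `1 / d`, so the right-hand side
is a rational number that `norm_num` can evaluate. -/
lemma natCast_rpow_neg_add_half_le (m k d : ℕ) (hm : 0 < m) (hd : 0 < d) :
    (m : ℝ) ^ (-((k : ℝ) + 1 / 2)) ≤ d / ((m : ℝ) ^ k * Nat.sqrt (m * d ^ 2)) := by
  have hm' : (0 : ℝ) < m := by exact_mod_cast hm
  have hsqrt_pos : (0 : ℝ) < Nat.sqrt (m * d ^ 2) := by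
    have : d ≤ Nat.sqrt (m * d ^ 2) := Nat.le_sqrt.mpr (by nlinarith)
    exact_mod_cast hd.trans_le this
  have hsqrt_le : (Nat.sqrt (m * d ^ 2) : ℝ) ≤ √(m : ℝ) * d := by
    have h := Real.nat_sqrt_le_real_sqrt (a := m * d ^ 2)
    rwa [Nat.cast_mul, Nat.cast_pow, sqrt_mul hm'.le, sqrt_sq (Nat.cast_nonneg d)] at h
  rw [rpow_neg hm'.le, rpow_add hm', rpow_natCast, ← sqrt_eq_rpow, inv_eq_one_div,
    div_le_div_iff₀ (by positivity) (by positivity)]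
  have hmk : (0 : ℝ) ≤ (m : ℝ) ^ k := by positivity
  nlinarith [mul_le_mul_of_nonneg_left hsqrt_le hmk]

lemma realZeta_five_halves_sq_le : realZeta (5 / 2) ^ 2 ≤ 9 / 5 := by
  have hζ := realZeta_le_sum_range_add (s := 5 / 2) (by norm_num) (N := 30) (by norm_num)
  have hterm : ∀ n ∈ range 30, ((n : ℝ) + 1) ^ (-(5 / 2 : ℝ)) ≤
      10 ^ 4 / (((n + 1 : ℕ) : ℝ) ^ 2 * Nat.sqrt ((n + 1) * (10 ^ 4) ^ 2)) := by
    intro n _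
    have h := natCast_rpow_neg_add_half_le (n + 1) 2 (10 ^ 4) n.succ_pos (by norm_num)
    push_cast at h ⊢
    norm_num at h ⊢
    exact h
  have htail : ((30 : ℕ) : ℝ) ^ (1 - 5 / 2 : ℝ) ≤
      10 ^ 4 / (((30 : ℕ) : ℝ) ^ 1 * Nat.sqrt (30 * (10 ^ 4) ^ 2)) := by
    have h := natCast_rpow_neg_add_half_le 30 1 (10 ^ 4) (by norm_num) (by norm_num)
    norm_num at h ⊢
    exact h
  calc realZeta (5 / 2) ^ 2
      ≤ (∑ n ∈ range 30, 10 ^ 4 / (((n + 1 : ℕ) : ℝ) ^ 2 * Nat.sqrt ((n + 1) * (10 ^ 4) ^ 2)) +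
          10 ^ 4 / (((30 : ℕ) : ℝ) ^ 1 * Nat.sqrt (30 * (10 ^ 4) ^ 2)) / (5 / 2 - 1)) ^ 2 := by
        gcongr
        · linarith [one_le_realZeta (s := 5 / 2) (by norm_num)]
        · exact hζ.trans (add_le_add (sum_le_sum hterm) (by gcongr))
    _ ≤ 9 / 5 := by
        simp only [sum_range_succ, sum_range_zero]
        norm_num

/-- For x ≥ 1, ζ(3/2 + x)² ≤ (8/5)·2^(−x) + 1. -/
theorem stmt_7 (x : ℝ) (hx : 1 ≤ x) :
    (realZeta (3 / 2 + x)) ^ 2 ≤ 8 / 5 * (2 : ℝ) ^ (-x) + 1 := by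
  have hmono := antitoneOn_two_rpow_mul_realZeta_sq_sub_one (a := 5 / 2) (by norm_num)
    (b := 3 / 2 + x) (show 1 < 3 / 2 + x by linarith) (by linarith)
  have hsplit : (2 : ℝ) ^ (5 / 2 : ℝ) = 2 ^ (3 / 2 + x) * (2 * 2 ^ (-x)) := by
    rw [show (5 / 2 : ℝ) = (3 / 2 + x) + (1 + -x) by ring, rpow_add two_pos (3 / 2 + x),
      rpow_add two_pos 1, rpow_one]
  have hpos : (0 : ℝ) < 2 ^ (3 / 2 + x) := by positivity
  simp only at hmono
  rw [hsplit, mul_assoc] at hmono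
  have h := le_of_mul_le_mul_left hmono hpos
  nlinarith [rpow_pos_of_pos two_pos (-x), realZeta_five_halves_sq_le]
end

section
/- For all integers m ≥ 6 and n ≥ 2, the inequality (m/(m+1))^{n−1} · ((16/5)·2^{−m} + 1)^n ≤ 1 holds. -/
lemma aux8 : ∀ m : ℕ, 6 ≤ m → 8 * m ≤ 2 ^ m := by
  intro m hm
  induction m, hm using Nat.le_induction with
  | base => norm_num
  | succ m hm ih =>
    have : 8 ≤ 2 ^ m := le_trans (by omega) ih
    calc 8 * (m + 1) = 8 * m + 8 := by ring
      _ ≤ 2 ^ m + 2 ^ m := by omega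
      _ = 2 ^ (m + 1) := by ring

/-- For integers m ≥ 6 and n ≥ 2, (m/(m+1))^(n−1)·((16/5)·2^(−m) + 1)^n ≤ 1. -/
theorem stmt_8 (m n : ℕ) (hm : 6 ≤ m) (hn : 2 ≤ n) :
    ((m : ℝ) / ((m : ℝ) + 1)) ^ (n - 1) *
      ((16 / 5) * (2 : ℝ) ^ (-(m : ℝ)) + 1) ^ n ≤ 1 := by
  have h2 : (2 : ℝ) ^ (-(m : ℝ)) = ((2 : ℝ) ^ m)⁻¹ := by
    rw [← Real.rpow_natCast 2 m, ← Real.rpow_neg (by norm_num)]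
  rw [h2]
  set t : ℝ := ((2 : ℝ) ^ m)⁻¹ with ht
  have hmR : (6 : ℝ) ≤ (m : ℝ) := by exact_mod_cast hm
  have hpow : (8 : ℝ) * m ≤ 2 ^ m := by exact_mod_cast aux8 m hm
  have h2m : (0 : ℝ) < 2 ^ m := by positivity
  have htpos : 0 < t := by positivity
  have hmt : 8 * (m : ℝ) * t ≤ 1 := by
    rw [ht]
    rw [mul_inv_le_iff₀ h2m]
    linarith
  have h64 : (64 : ℝ) * t ≤ 1 := by
    have h6 : (2:ℕ)^6 ≤ 2 ^ m := Nat.pow_le_pow_right (by norm_num) hm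
    have : (64 : ℝ) ≤ 2 ^ m := by exact_mod_cast h6
    rw [ht, mul_inv_le_iff₀ h2m]
    linarith
  -- key: (1 + 16/5 t)^2 * m ≤ m + 1
  have key : (m : ℝ) * (16 / 5 * t + 1) ^ 2 ≤ (m : ℝ) + 1 := by
    nlinarith [mul_pos htpos htpos, sq_nonneg t, sq_nonneg ((m:ℝ) * t)]
  have hm1 : (0 : ℝ) < (m : ℝ) + 1 := by linarith
  have hratio : (0 : ℝ) ≤ (m : ℝ) / ((m : ℝ) + 1) := by positivity
  have hbase : (1 : ℝ) ≤ 16 / 5 * t + 1 := by linarith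
  have ha : ((m : ℝ) / ((m : ℝ) + 1)) * (16 / 5 * t + 1) ^ 2 ≤ 1 := by
    rw [div_mul_eq_mul_div, div_le_one hm1]
    linarith
  have hne : n ≤ 2 * (n - 1) := by omega
  calc ((m : ℝ) / ((m : ℝ) + 1)) ^ (n - 1) * (16 / 5 * t + 1) ^ n
      ≤ ((m : ℝ) / ((m : ℝ) + 1)) ^ (n - 1) * (16 / 5 * t + 1) ^ (2 * (n - 1)) := by
        apply mul_le_mul_of_nonneg_left (pow_le_pow_right₀ hbase hne) (by positivity)
    _ = (((m : ℝ) / ((m : ℝ) + 1)) * (16 / 5 * t + 1) ^ 2) ^ (n - 1) := by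
        rw [mul_pow, pow_mul]
    _ ≤ 1 := pow_le_one₀ (by positivity) ha
end

section
/- For all integers n ≥ 2 and m ≥ 4, one has (2π)^n · (n!)² / (2^{n−1} · (m+1) · (2m+1)^{n−2} · n^{2n}) ≤ 1. Moreover, for n ≥ 3 this inequality already holds for all m ≥ 1. -/
open Real

lemma pow_step9 (k : ℕ) : 3 * ((k:ℝ)+3)^(2*k+6) ≤ ((k:ℝ)+4)^(2*k+6) := by
  have hk3 : (0:ℝ) < (k:ℝ)+3 := by positivity
  have hx : (0:ℝ) < 1/((k:ℝ)+3) := by positivity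
  have h := one_add_mul_le_pow (a := 1/((k:ℝ)+3)) (by linarith : (-2:ℝ) ≤ 1/((k:ℝ)+3)) (2*k+6)
  have h1 : (1 + ((2*k+6 : ℕ):ℝ) * (1/((k:ℝ)+3))) = 3 := by
    push_cast; field_simp; ring
  have h2 : ((1:ℝ) + 1/((k:ℝ)+3))^(2*k+6) * ((k:ℝ)+3)^(2*k+6) = ((k:ℝ)+4)^(2*k+6) := by
    rw [← mul_pow]; congr 1; field_simp; ring
  have h3 : (0:ℝ) ≤ ((k:ℝ)+3)^(2*k+6) := by positivity
  calc 3 * ((k:ℝ)+3)^(2*k+6)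
      = (1 + ((2*k+6 : ℕ):ℝ) * (1/((k:ℝ)+3))) * ((k:ℝ)+3)^(2*k+6) := by rw [h1]
    _ ≤ ((1:ℝ) + 1/((k:ℝ)+3))^(2*k+6) * ((k:ℝ)+3)^(2*k+6) := by
        exact mul_le_mul_of_nonneg_right h h3
    _ = ((k:ℝ)+4)^(2*k+6) := h2

lemma key9 (m : ℕ) (hm : 1 ≤ m) : ∀ k : ℕ,
    (2*Real.pi)^(k+3) * (((k+3).factorial : ℝ))^2 ≤
      2^(k+2) * ((m:ℝ)+1) * (2*(m:ℝ)+1)^(k+1) * ((k:ℝ)+3)^(2*(k+3)) := by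
  have hm1 : (1:ℝ) ≤ (m:ℝ) := by exact_mod_cast hm
  intro k
  induction k with
  | zero =>
      simp only [Nat.factorial]
      norm_num
      have hpi := Real.pi_lt_d2
      nlinarith [Real.pi_pos, sq_nonneg ((m:ℝ)-1), mul_le_mul hpi.le hpi.le Real.pi_pos.le (by norm_num : (0:ℝ) ≤ 3.15), Real.pi_pos.le]
  | succ k ih =>
      have hpi := Real.pi_lt_d2
      have hpipos := Real.pi_pos
      set a : ℝ := ((k:ℝ)+3)^(2*k+6) with ha
      set b : ℝ := ((k:ℝ)+4)^(2*k+6) with hb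
      have hab : 3 * a ≤ b := pow_step9 k
      have hapos : 0 < a := by positivity
      have hbpos : 0 < b := by positivity
      -- rewrite old RHS exponent
      have hexp : ((k:ℝ)+3)^(2*(k+3)) = a := by rw [ha]; ring_nf
      have hexp' : (((k+1:ℕ):ℝ)+3)^(2*(k+1+3)) = b * ((k:ℝ)+4)^2 := by
        push_cast
        rw [hb, ← pow_add]
        ring_nf
      have hfac : (((k+1+3).factorial : ℝ)) = ((k:ℝ)+4) * ((k+3).factorial : ℝ) := by
        show (((k+4).factorial : ℝ)) = _
        rw [Nat.factorial_succ]
        push_cast; ring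
      have hC : (0:ℝ) < 2^(k+2) * ((m:ℝ)+1) * (2*(m:ℝ)+1)^(k+1) := by positivity
      have hfacpos : (0:ℝ) < ((k+3).factorial : ℝ) := by positivity
      have step1 : (2*Real.pi)^(k+1+3) * (((k+1+3).factorial : ℝ))^2
          = (2*Real.pi) * ((k:ℝ)+4)^2 * ((2*Real.pi)^(k+3) * (((k+3).factorial : ℝ))^2) := by
        rw [hfac, pow_succ]
        ring
      rw [step1]
      have hmul : (2*Real.pi) * ((k:ℝ)+4)^2 * ((2*Real.pi)^(k+3) * (((k+3).factorial : ℝ))^2)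
          ≤ (2*Real.pi) * ((k:ℝ)+4)^2 * (2^(k+2) * ((m:ℝ)+1) * (2*(m:ℝ)+1)^(k+1) * a) := by
        rw [hexp] at ih
        have : (0:ℝ) ≤ (2*Real.pi) * ((k:ℝ)+4)^2 := by positivity
        exact mul_le_mul_of_nonneg_left ih this
      refine hmul.trans ?_
      rw [hexp']
      have hgoal : (2*Real.pi) * ((k:ℝ)+4)^2 * (2^(k+2) * ((m:ℝ)+1) * (2*(m:ℝ)+1)^(k+1) * a)
          ≤ 2^(k+1+2) * ((m:ℝ)+1) * (2*(m:ℝ)+1)^(k+1+1) * (b * ((k:ℝ)+4)^2) := by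
        have hR : 2^(k+1+2) * ((m:ℝ)+1) * (2*(m:ℝ)+1)^(k+1+1) * (b * ((k:ℝ)+4)^2)
            = (2 * (2*(m:ℝ)+1) * b) * (((k:ℝ)+4)^2 * (2^(k+2) * ((m:ℝ)+1) * (2*(m:ℝ)+1)^(k+1))) := by
          ring
        have hL : (2*Real.pi) * ((k:ℝ)+4)^2 * (2^(k+2) * ((m:ℝ)+1) * (2*(m:ℝ)+1)^(k+1) * a)
            = (2 * Real.pi * a) * (((k:ℝ)+4)^2 * (2^(k+2) * ((m:ℝ)+1) * (2*(m:ℝ)+1)^(k+1))) := by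
          ring
        rw [hL, hR]
        have hcore : 2 * Real.pi * a ≤ 2 * (2*(m:ℝ)+1) * b := by
          nlinarith [hab, hapos.le, hbpos.le]
        have : (0:ℝ) ≤ ((k:ℝ)+4)^2 * (2^(k+2) * ((m:ℝ)+1) * (2*(m:ℝ)+1)^(k+1)) := by positivity
        exact mul_le_mul_of_nonneg_right hcore this
      exact hgoal

/-- The term outside the sum in Tₙ(m+1) − Tₙ(m) is nonpositive: the stated inequality
holds for n ≥ 2, m ≥ 4, and already for all m ≥ 1 when n ≥ 3. -/
theorem stmt_9 :
    (∀ n m : ℕ, 2 ≤ n → 4 ≤ m →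
      (2 * Real.pi) ^ n * ((n.factorial : ℝ)) ^ 2 /
        (2 ^ (n - 1) * ((m : ℝ) + 1) * (2 * (m : ℝ) + 1) ^ (n - 2) * (n : ℝ) ^ (2 * n)) ≤ 1) ∧
    (∀ n m : ℕ, 3 ≤ n → 1 ≤ m →
      (2 * Real.pi) ^ n * ((n.factorial : ℝ)) ^ 2 /
        (2 ^ (n - 1) * ((m : ℝ) + 1) * (2 * (m : ℝ) + 1) ^ (n - 2) * (n : ℝ) ^ (2 * n)) ≤ 1) := by
  have main : ∀ n m : ℕ, 3 ≤ n → 1 ≤ m →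
      (2 * Real.pi) ^ n * ((n.factorial : ℝ)) ^ 2 /
        (2 ^ (n - 1) * ((m : ℝ) + 1) * (2 * (m : ℝ) + 1) ^ (n - 2) * (n : ℝ) ^ (2 * n)) ≤ 1 := by
    intro n m hn hm
    obtain ⟨k, rfl⟩ := Nat.exists_eq_add_of_le hn
    have hden : (0:ℝ) < 2 ^ (3 + k - 1) * ((m : ℝ) + 1) * (2 * (m : ℝ) + 1) ^ (3 + k - 2) * ((3 + k : ℕ) : ℝ) ^ (2 * (3 + k)) := by
      positivity
    rw [div_le_one hden]
    have h := key9 m hm k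
    have e1 : (3 + k - 1) = k + 2 := by omega
    have e2 : (3 + k - 2) = k + 1 := by omega
    have e3 : (3 + k) = k + 3 := by omega
    rw [e1, e2, e3]
    have e4 : (((k + 3 : ℕ)) : ℝ) = (k:ℝ) + 3 := by push_cast; ring
    rw [e4]
    exact h
  refine ⟨?_, main⟩
  intro n m hn hm
  rcases Nat.lt_or_ge n 3 with h3 | h3
  · have hn2 : n = 2 := by omega
    subst hn2
    have hm4 : (4:ℝ) ≤ (m:ℝ) := by exact_mod_cast hm
    have hden : (0:ℝ) < 2 ^ (2 - 1) * ((m : ℝ) + 1) * (2 * (m : ℝ) + 1) ^ (2 - 2) * ((2 : ℕ) : ℝ) ^ (2 * 2) := by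
      positivity
    rw [div_le_one hden]
    norm_num [Nat.factorial]
    have hpi := Real.pi_lt_d2
    nlinarith [Real.pi_pos]
  · exact main n m h3 (by omega)
end

section
/- Let c : ℕ → ℝ be a sequence with 0 ≤ c(m) ≤ 2n·Λ(m) for all m ≥ 2, where Λ is the von Mangoldt function and n ≥ 1 is an integer. Suppose L is a positive differentiable function on (1, ∞) with −L'(s)/L(s) = Σ_{m≥2} c(m)/m^s for all s > 1 (the series converging). Then for all 0 < a < b, L(1+a)/L(1+b) ≤ (ζ(1+a)/ζ(1+b))^{2n}. -/
/-! With φ = log L − 2n·log ζ, the two Dirichlet series give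
φ' = 2n(−ζ'/ζ) − (−L'/L) = Σ (2n·Λ(m) − c(m)) m^(−s) ≥ 0 on (1, ∞), so φ is increasing and
φ(1+a) ≤ φ(1+b) exponentiates to the claim. The series for −ζ'/ζ is Mathlib's L-series of Λ,
read at real arguments. -/

open Real

theorem div_le_div_rpow_of_neg_logDeriv_le {f g : ℝ → ℝ} {s₀ x y k : ℝ}
    (hf : ∀ s, s₀ < s → 0 < f s) (hg : ∀ s, s₀ < s → 0 < g s)
    (hf' : ∀ s, s₀ < s → DifferentiableAt ℝ f s) (hg' : ∀ s, s₀ < s → DifferentiableAt ℝ g s)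
    (hle : ∀ s, s₀ < s → -deriv f s / f s ≤ k * (-deriv g s / g s))
    (hx : s₀ < x) (hxy : x ≤ y) :
    f x / f y ≤ (g x / g y) ^ k := by
  have hy : s₀ < y := hx.trans_le hxy
  have hderiv : ∀ s ∈ Set.Ioi s₀, HasDerivAt (fun s => log (f s) - k * log (g s))
      (deriv f s / f s - k * (deriv g s / g s)) s := fun s hs =>
    ((hf' s hs).hasDerivAt.log (hf s hs).ne').sub
      (((hg' s hs).hasDerivAt.log (hg s hs).ne').const_mul k)
  have hmono : MonotoneOn (fun s => log (f s) - k * log (g s)) (Set.Ioi s₀) := by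
    refine monotoneOn_of_hasDerivWithinAt_nonneg (convex_Ioi s₀)
      (f' := fun s => deriv f s / f s - k * (deriv g s / g s))
      (fun s hs => (hderiv s hs).continuousAt.continuousWithinAt) (fun s hs => ?_) fun s hs => ?_
    · rw [interior_Ioi] at hs ⊢
      exact (hderiv s hs).hasDerivWithinAt
    · rw [interior_Ioi] at hs
      have := hle s hs
      rw [neg_div, neg_div] at this
      linarith
  have hlog : log (f x) - log (f y) ≤ k * log (g x / g y) := by
    have := hmono hx hy hxy
    rw [log_div (hg x hx).ne' (hg y hy).ne']
    simp only at this
    linarith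
  calc f x / f y = exp (log (f x) - log (f y)) := by
        rw [exp_sub, exp_log (hf x hx), exp_log (hf y hy)]
    _ ≤ exp (log (g x / g y) * k) := by rw [mul_comm]; exact exp_le_exp.2 hlog
    _ = (g x / g y) ^ k := (rpow_def_of_pos (div_pos (hg x hx) (hg y hy)) k).symm

lemma LSeries.term_ofReal (f : ℕ → ℝ) {s : ℝ} (hs : s ≠ 0) (n : ℕ) :
    LSeries.term (fun m => (f m : ℂ)) s n = ((f n / (n : ℝ) ^ s : ℝ) : ℂ) := by
  rw [LSeries.term_of_ne_zero' (by exact_mod_cast hs), Complex.ofReal_div,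
    Complex.ofReal_cpow n.cast_nonneg, Complex.ofReal_natCast]

lemma realZeta_pos {s : ℝ} (hs : 1 < s) : 0 < realZeta s := by
  have hsum : Summable fun n : ℕ => ((n : ℝ) + 1) ^ (-s) := by
    refine ((summable_nat_add_iff 1).2 (summable_nat_rpow_inv.2 hs)).congr fun n => ?_
    push_cast
    rw [rpow_neg (by positivity)]
  exact hsum.tsum_pos (fun n => by positivity) 0 (by positivity)

lemma ofReal_realZeta {s : ℝ} (hs : 1 < s) : (realZeta s : ℂ) = riemannZeta s := by
  rw [zeta_eq_tsum_one_div_nat_add_one_cpow (by simpa using hs), realZeta, Complex.ofReal_tsum]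
  refine tsum_congr fun n => ?_
  rw [Complex.ofReal_cpow (by positivity)]
  push_cast
  rw [Complex.cpow_neg, one_div]

lemma hasDerivAt_realZeta {s : ℝ} (hs : 1 < s) :
    HasDerivAt realZeta (deriv riemannZeta s).re s := by
  have hne : (s : ℂ) ≠ 1 := by exact_mod_cast hs.ne'
  refine (differentiableAt_riemannZeta hne).hasDerivAt.real_of_complex.congr_of_eventuallyEq ?_
  filter_upwards [eventually_gt_nhds hs] with x hx
  rw [← ofReal_realZeta hx, Complex.ofReal_re]

open ArithmeticFunction in
lemma summable_vonMangoldt_div_rpow {s : ℝ} (hs : 1 < s) :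
    Summable fun m : ℕ => Λ m / (m : ℝ) ^ s := by
  have := LSeriesSummable_vonMangoldt (s := s) (by simpa using hs)
  rw [LSeriesSummable, funext (LSeries.term_ofReal _ (by positivity))] at this
  exact Complex.summable_ofReal.1 this

open ArithmeticFunction in
lemma neg_deriv_realZeta_div {s : ℝ} (hs : 1 < s) :
    -deriv realZeta s / realZeta s = ∑' m : ℕ, Λ m / (m : ℝ) ^ s := by
  have h := LSeries_vonMangoldt_eq_deriv_riemannZeta_div (s := s) (by simpa using hs)
  rw [LSeries, funext (LSeries.term_ofReal _ (by positivity)), ← Complex.ofReal_tsum,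
    ← ofReal_realZeta hs] at h
  rw [(hasDerivAt_realZeta hs).deriv, ← Complex.neg_re, ← Complex.div_ofReal_re, ← h,
    Complex.ofReal_re]

open ArithmeticFunction in
lemma tsum_vonMangoldt_div_rpow_eq_tsum_add_two (s : ℝ) :
    ∑' m : ℕ, Λ m / (m : ℝ) ^ s = ∑' m : ℕ, Λ (m + 2) / ((m : ℝ) + 2) ^ s := by
  refine ((add_left_injective 2).tsum_eq fun m hm => ?_).symm.trans
    (tsum_congr fun m => by push_cast; rfl)
  have h2 : 2 ≤ m := by
    by_contra! h
    interval_cases m <;> simp at hm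
  exact ⟨m - 2, Nat.sub_add_cancel h2⟩

open ArithmeticFunction in
lemma summable_vonMangoldt_add_two_div_rpow {s : ℝ} (hs : 1 < s) :
    Summable fun m : ℕ => Λ (m + 2) / ((m : ℝ) + 2) ^ s :=
  ((summable_nat_add_iff 2).2 (summable_vonMangoldt_div_rpow hs)).congr fun m => by push_cast; rfl

theorem stmt_11_general (n : ℕ) (c : ℕ → ℝ)
    (hc : ∀ m : ℕ, 2 ≤ m → 0 ≤ c m ∧ c m ≤ 2 * n * ArithmeticFunction.vonMangoldt m)
    (L : ℝ → ℝ) (hLpos : ∀ s : ℝ, 1 < s → 0 < L s)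
    (hLdiff : ∀ s : ℝ, 1 < s → DifferentiableAt ℝ L s)
    (hsum : ∀ s : ℝ, 1 < s → Summable (fun m : ℕ => c (m + 2) / ((m : ℝ) + 2) ^ s))
    (hseries : ∀ s : ℝ, 1 < s →
      -deriv L s / L s = ∑' m : ℕ, c (m + 2) / ((m : ℝ) + 2) ^ s)
    (a b : ℝ) (ha : 0 < a) (hab : a < b) :
    L (1 + a) / L (1 + b) ≤ (realZeta (1 + a) / realZeta (1 + b)) ^ (2 * n) := by
  have hcmp : ∀ s, 1 < s →
      -deriv L s / L s ≤ ((2 * n : ℕ) : ℝ) * (-deriv realZeta s / realZeta s) := by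
    intro s hs
    rw [hseries s hs, neg_deriv_realZeta_div hs, tsum_vonMangoldt_div_rpow_eq_tsum_add_two,
      ← tsum_mul_left]
    refine (hsum s hs).tsum_le_tsum (fun m => ?_)
      ((summable_vonMangoldt_add_two_div_rpow hs).mul_left _)
    rw [← mul_div_assoc]
    gcongr
    exact_mod_cast (hc (m + 2) (by omega)).2
  rw [← rpow_natCast]
  exact div_le_div_rpow_of_neg_logDeriv_le hLpos (fun s => realZeta_pos) hLdiff
    (fun s hs => (hasDerivAt_realZeta hs).differentiableAt) hcmp (by linarith) (by linarith)

/-- Abstract form of Lemma 2.3: if −L'/L has a Dirichlet series with coefficients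
0 ≤ c(m) ≤ 2n·Λ(m), then L(1+a)/L(1+b) ≤ (ζ(1+a)/ζ(1+b))^(2n) for 0 < a < b. -/
theorem stmt_11 (n : ℕ) (hn : 1 ≤ n) (c : ℕ → ℝ)
    (hc : ∀ m : ℕ, 2 ≤ m → 0 ≤ c m ∧ c m ≤ 2 * n * ArithmeticFunction.vonMangoldt m)
    (L : ℝ → ℝ) (hLpos : ∀ s : ℝ, 1 < s → 0 < L s)
    (hLdiff : ∀ s : ℝ, 1 < s → DifferentiableAt ℝ L s)
    (hsum : ∀ s : ℝ, 1 < s → Summable (fun m : ℕ => c (m + 2) / ((m : ℝ) + 2) ^ s))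
    (hseries : ∀ s : ℝ, 1 < s →
      -deriv L s / L s = ∑' m : ℕ, c (m + 2) / ((m : ℝ) + 2) ^ s)
    (a b : ℝ) (ha : 0 < a) (hab : a < b) :
    L (1 + a) / L (1 + b) ≤ (realZeta (1 + a) / realZeta (1 + b)) ^ (2 * n) :=
  stmt_11_general n c hc L hLpos hLdiff hsum hseries a b ha hab
end

section
/- Let Λ : ℂ → ℂ be an entire function that is real and nonnegative on the real axis for arguments ≥ k/2, whose zeros ρ all satisfy |Re(ρ) − k/2| < 1/2, and which admits a Hadamard factorization Λ(s) = e^{A} · Π_{ρ real} (1 − s/ρ) · Π_{Im(ρ)>0} |1 − s/ρ|² for real s, where the real zeros ρ all satisfy |ρ − k/2| < 1/2. Then Λ is monotonically nondecreasing on the ray [k/2 + 1/2, ∞), and 0 ≤ Λ(k/2) ≤ Λ(k/2 + 1) ≤ Λ(k/2 + 2) ≤ ⋯. -/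
/-!
On the real line write `Λ(s) = e^A ∏ F_ρ(s)`. Each factor satisfies `|F_ρ(s)| ≤ |F_ρ(t)|` as soon
as `|s - Re ρ| ≤ |t - Re ρ|`, which holds for `k/2 + 1/2 ≤ s ≤ t` and for `(s, t) = (k/2, k/2 + 1)`
since all zeros lie in the strip `|Re ρ - k/2| < 1/2`. Positivity of `Λ` on the ray forces a
convergent product there to have only finitely many (negative) real-zero factors, so the factorwise
comparison passes to the products. Where the product diverges, `tprod` takes the junk value `1`,
and continuity of `Λ` bridges the convergent and divergent parts of the ray.
-/

open Real Filter Topology Set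

section RealProducts

variable {ι : Type*} {f g : ι → ℝ} {p q : ℝ}

lemma HasProd.apply_ne_zero (hf : HasProd f p) (hp : p ≠ 0) (i : ι) : f i ≠ 0 := fun hi =>
  hp (hf.unique (hasProd_zero_of_exists_eq_zero ⟨i, hi⟩))

lemma HasProd.eventually_pos (hf : HasProd f p) (hp : p ≠ 0) : ∀ᶠ i in cofinite, 0 < f i := by
  classical
  have hopen : IsOpen {x : ℝ | 0 < x * p} := isOpen_lt continuous_const (by fun_prop)
  obtain ⟨s, hs⟩ := eventually_atTop.1 (hf.eventually (hopen.mem_nhds (mul_self_pos.2 hp)))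
  filter_upwards [s.finite_toSet.eventually_cofinite_notMem] with i hi
  have h := hs (insert i s) (Finset.subset_insert _ _)
  rw [Finset.prod_insert hi, mul_assoc] at h
  exact pos_of_mul_pos_left h (hs s le_rfl).le

lemma Real.hasSum_log_of_hasProd (hf : ∀ i, 0 < f i) (h : HasProd f p) (hp : 0 < p) :
    HasSum (fun i => log (f i)) (log p) :=
  ((continuousAt_log hp.ne').tendsto.comp h).congr fun s => by
    simp [Real.log_prod fun i _ => (hf i).ne']

lemma multipliable_of_nonneg_of_le_one (h0 : ∀ i, 0 ≤ f i) (h1 : ∀ i, f i ≤ 1) :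
    Multipliable f :=
  ⟨_, tendsto_atTop_ciInf (Finset.prod_anti_set_of_le_one h0 h1)
    ⟨0, by rintro _ ⟨s, rfl⟩; exact Finset.prod_nonneg fun i _ => h0 i⟩⟩

/-- Split `|f i| = max |f i| 1 * min |f i| 1`: the large factors are controlled through
`log |f i| ≤ log |g i|`, the small ones have antitone partial products. -/
lemma multipliable_abs_of_abs_le (hg : HasProd g q) (hq : q ≠ 0) (hfg : ∀ i, |f i| ≤ |g i|) :
    Multipliable fun i => |f i| := by
  have hlog : Summable fun i => |log (|g i|)| :=
    (Real.hasSum_log_of_hasProd (fun i => abs_pos.2 (hg.apply_ne_zero hq i)) hg.abs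
      (abs_pos.2 hq)).summable.abs
  have hmax : Multipliable fun i => max |f i| 1 := by
    refine Real.multipliable_of_summable_log (fun i => by positivity)
      (hlog.of_nonneg_of_le (fun i => log_nonneg (le_max_right _ _)) fun i => ?_)
    rcases le_total |f i| 1 with h | h
    · simp [max_eq_right h]
    · rw [max_eq_left h]
      exact (log_le_log (one_pos.trans_le h) (hfg i)).trans (le_abs_self _)
  have hmin : Multipliable fun i => min |f i| 1 :=
    multipliable_of_nonneg_of_le_one (fun i => by positivity) fun i => min_le_right _ _
  simpa only [max_mul_min, mul_one] using hmax.mul hmin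

lemma multipliable_of_abs_le (hg : HasProd g q) (hq : q ≠ 0) (hfg : ∀ i, |f i| ≤ |g i|)
    (hf : ∀ᶠ i in cofinite, 0 ≤ f i) : Multipliable f := by
  by_cases! h0 : ∃ i, f i = 0
  · exact multipliable_of_exists_eq_zero h0
  exact (multipliable_abs_of_abs_le hg hq hfg).congr_cofinite₀ (fun i => abs_ne_zero.2 (h0 i))
    (hf.mono fun i hi => abs_of_nonneg hi)

lemma tprod_le_abs_of_abs_le (hg : HasProd g q) (hq : q ≠ 0) (hfg : ∀ i, |f i| ≤ |g i|)
    (hf : ∀ᶠ i in cofinite, 0 ≤ f i) : ∏' i, f i ≤ |q| :=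
  (le_abs_self _).trans <|
    le_of_tendsto_of_tendsto' (multipliable_of_abs_le hg hq hfg hf).hasProd.abs hg.abs fun _ =>
      Finset.prod_le_prod (fun _ _ => abs_nonneg _) fun i _ => hfg i

lemma tprod_le_one_of_abs_le_one (h : ∀ i, |f i| ≤ 1) : ∏' i, f i ≤ 1 := by
  by_cases hf : Multipliable f
  · exact (le_abs_self _).trans <| le_of_tendsto' hf.hasProd.abs fun _ =>
      Finset.prod_le_one (fun i _ => abs_nonneg _) fun i _ => h i
  · rw [tprod_eq_one_of_not_multipliable hf]

end RealProducts

section Monotone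

variable {α β : Type*} [ConditionallyCompleteLinearOrder α] [TopologicalSpace α] [OrderTopology α]
  [DenselyOrdered α] [LinearOrder β] [TopologicalSpace β] [OrderClosedTopology β] {g : α → β}

lemma le_of_continuousOn_Icc_of_forall_le_or_le {x y : α} {u v : β} (hxy : x ≤ y)
    (hg : ContinuousOn g (Icc x y)) (hcover : ∀ t ∈ Icc x y, u ≤ g t ∨ g t ≤ v)
    (hx : u ≤ g x) (hy : g y ≤ v) : u ≤ v := by
  obtain ⟨t, -, ⟨-, hut⟩, ⟨-, htv⟩⟩ := isPreconnected_closed_iff.1 isPreconnected_Icc _ _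
    (hg.preimage_isClosed_of_isClosed isClosed_Icc isClosed_Ici)
    (hg.preimage_isClosed_of_isClosed isClosed_Icc isClosed_Iic)
    (fun t ht => (hcover t ht).imp (fun h => ⟨ht, h⟩) fun h => ⟨ht, h⟩)
    ⟨x, left_mem_Icc.2 hxy, left_mem_Icc.2 hxy, hx⟩
    ⟨y, right_mem_Icc.2 hxy, right_mem_Icc.2 hxy, hy⟩
  exact le_trans hut htv

lemma monotoneOn_of_monotoneOn_inter_of_eqOn_diff {S B : Set α} {c : β}
    (hg : ContinuousOn g S) (hS : S.OrdConnected) (hB : MonotoneOn g (S ∩ B))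
    (hc : EqOn g (fun _ => c) (S \ B)) : MonotoneOn g S := by
  intro x hx y hy hxy
  have hIcc : Icc x y ⊆ S := hS.out hx hy
  by_cases hxB : x ∈ B <;> by_cases hyB : y ∈ B
  · exact hB ⟨hx, hxB⟩ ⟨hy, hyB⟩ hxy
  · rw [hc ⟨hy, hyB⟩]
    refine le_of_continuousOn_Icc_of_forall_le_or_le hxy (hg.mono hIcc) (fun t ht => ?_) le_rfl
      (hc ⟨hy, hyB⟩).le
    by_cases htB : t ∈ B
    · exact .inl (hB ⟨hx, hxB⟩ ⟨hIcc ht, htB⟩ ht.1)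
    · exact .inr (hc ⟨hIcc ht, htB⟩).le
  · rw [hc ⟨hx, hxB⟩]
    refine le_of_continuousOn_Icc_of_forall_le_or_le hxy (hg.mono hIcc) (fun t ht => ?_)
      (hc ⟨hx, hxB⟩).ge le_rfl
    by_cases htB : t ∈ B
    · exact .inr (hB ⟨hIcc ht, htB⟩ ⟨hy, hyB⟩ ht.2)
    · exact .inl (hc ⟨hIcc ht, htB⟩).ge
  · rw [hc ⟨hx, hxB⟩, hc ⟨hy, hyB⟩]

end Monotone

section HadamardFactor

/-- A zero in the upper half-plane stands for the pair `ρ, conj ρ`, so zeros in the lower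
half-plane contribute `1`. -/
noncomputable def hadamardFactor (ρ : ℂ) (s : ℝ) : ℝ :=
  if ρ.im = 0 then 1 - s / ρ.re else if 0 < ρ.im then ‖1 - (s : ℂ) / ρ‖ ^ 2 else 1

variable {ρ : ℂ} {s t : ℝ}

@[simp]
lemma hadamardFactor_zero : hadamardFactor ρ 0 = 1 := by
  simp [hadamardFactor]

lemma norm_one_sub_div_le_of_abs_sub_re_le (h : |s - ρ.re| ≤ |t - ρ.re|) :
    ‖1 - (s : ℂ) / ρ‖ ≤ ‖1 - (t : ℂ) / ρ‖ := by
  rcases eq_or_ne ρ 0 with rfl | hρ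
  · simp
  rw [one_sub_div hρ, one_sub_div hρ, norm_div, norm_div]
  gcongr
  rw [← sq_le_sq₀ (norm_nonneg _) (norm_nonneg _), Complex.sq_norm, Complex.sq_norm,
    Complex.normSq_apply, Complex.normSq_apply]
  simp only [Complex.sub_re, Complex.sub_im, Complex.ofReal_re, Complex.ofReal_im, sub_zero]
  nlinarith [sq_le_sq.2 h]

lemma abs_hadamardFactor_le (h : |s - ρ.re| ≤ |t - ρ.re|) :
    |hadamardFactor ρ s| ≤ |hadamardFactor ρ t| := by
  unfold hadamardFactor
  split_ifs
  · rcases eq_or_ne ρ.re 0 with h0 | h0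
    · simp [h0]
    rw [one_sub_div h0, one_sub_div h0, abs_div, abs_div, abs_sub_comm ρ.re, abs_sub_comm ρ.re]
    gcongr
  · rw [abs_of_nonneg (by positivity), abs_of_nonneg (by positivity)]
    gcongr
    exact norm_one_sub_div_le_of_abs_sub_re_le h
  · rfl

lemma hadamardFactor_neg (him : ρ.im = 0) (hre : 0 < ρ.re) (hs : ρ.re < s) :
    hadamardFactor ρ s < 0 := by
  rwa [hadamardFactor, if_pos him, sub_neg, one_lt_div hre]

lemma hadamardFactor_nonneg_of_im_ne_zero (him : ρ.im ≠ 0) : 0 ≤ hadamardFactor ρ s := by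
  rw [hadamardFactor, if_neg him]
  split_ifs <;> positivity

end HadamardFactor

section HadamardProduct

variable {ι : Type*} {ρ : ι → ℂ} {s t q A : ℝ} {L : ℝ → ℝ}

/-- Real zeros to the left of `t` give negative factors at `t`, so a product with nonzero value
has only finitely many of them. -/
lemma eventually_nonneg_hadamardFactor (hρ : ∀ i, 0 < (ρ i).re ∧ (ρ i).re < t)
    (ht : HasProd (fun i => hadamardFactor (ρ i) t) q) (hq : q ≠ 0) :
    ∀ᶠ i in cofinite, 0 ≤ hadamardFactor (ρ i) s :=
  (ht.eventually_pos hq).mono fun i hi => hadamardFactor_nonneg_of_im_ne_zero fun him =>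
    (hadamardFactor_neg him (hρ i).1 (hρ i).2).not_gt hi

lemma tprod_hadamardFactor_le (hρ : ∀ i, 0 < (ρ i).re ∧ (ρ i).re < t)
    (hst : ∀ i, |s - (ρ i).re| ≤ |t - (ρ i).re|)
    (ht : Multipliable fun i => hadamardFactor (ρ i) t)
    (htpos : 0 < ∏' i, hadamardFactor (ρ i) t) :
    ∏' i, hadamardFactor (ρ i) s ≤ ∏' i, hadamardFactor (ρ i) t := by
  have h := tprod_le_abs_of_abs_le ht.hasProd htpos.ne' (fun i => abs_hadamardFactor_le (hst i))
    (eventually_nonneg_hadamardFactor hρ ht.hasProd htpos.ne')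
  rwa [abs_of_pos htpos] at h

lemma tprod_hadamardFactor_pos (hprod : L t = exp A * ∏' i, hadamardFactor (ρ i) t)
    (hpos : 0 < L t) : 0 < ∏' i, hadamardFactor (ρ i) t :=
  (mul_pos_iff_of_pos_left (exp_pos A)).1 (hprod ▸ hpos)

theorem monotoneOn_Ici_of_eq_exp_mul_tprod {a : ℝ} (hL : ContinuousOn L (Ici a))
    (hρ : ∀ i, 0 < (ρ i).re ∧ (ρ i).re < a)
    (hprod : ∀ s, L s = exp A * ∏' i, hadamardFactor (ρ i) s)
    (hpos : ∀ s, a ≤ s → 0 < L s) : MonotoneOn L (Ici a) := by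
  refine monotoneOn_of_monotoneOn_inter_of_eqOn_diff (c := exp A)
    (B := {s | Multipliable fun i => hadamardFactor (ρ i) s}) hL ordConnected_Ici ?_ ?_
  · rintro s ⟨hs, -⟩ t ⟨ht, hmul⟩ hst
    have hρt : ∀ i, 0 < (ρ i).re ∧ (ρ i).re < t := fun i => ⟨(hρ i).1, (hρ i).2.trans_le ht⟩
    have hdist : ∀ i, |s - (ρ i).re| ≤ |t - (ρ i).re| := fun i => by
      rw [abs_of_pos (by linarith [(hρ i).2, mem_Ici.1 hs]), abs_of_pos (by linarith [(hρt i).2])]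
      linarith
    rw [hprod s, hprod t]
    exact mul_le_mul_of_nonneg_left (tprod_hadamardFactor_le hρt hdist hmul
      (tprod_hadamardFactor_pos (hprod t) (hpos t ht))) (exp_pos A).le
  · rintro s ⟨-, hmul⟩
    simp [hprod s, tprod_eq_one_of_not_multipliable hmul]

theorem le_add_one_of_eq_exp_mul_tprod {m : ℝ} (hm : 1 ≤ m) (hρ : ∀ i, |(ρ i).re - m| < 1 / 2)
    (hprod : ∀ s, L s = exp A * ∏' i, hadamardFactor (ρ i) s) (hpos : 0 < L (m + 1)) :
    L m ≤ L (m + 1) := by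
  rw [hprod m, hprod (m + 1)]
  refine mul_le_mul_of_nonneg_left ?_ (exp_pos A).le
  by_cases hmul : Multipliable fun i => hadamardFactor (ρ i) (m + 1)
  · refine tprod_hadamardFactor_le (fun i => ?_) (fun i => ?_) hmul
      (tprod_hadamardFactor_pos (hprod (m + 1)) hpos)
    all_goals obtain ⟨h₁, h₂⟩ := abs_lt.1 (hρ i)
    · constructor <;> linarith
    · rw [abs_of_pos (a := m + 1 - (ρ i).re) (by linarith)]
      exact abs_le.2 ⟨by linarith, by linarith⟩
  -- the junk value `1` of the divergent product is matched by `|m - ρ| ≤ |0 - ρ|`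
  rw [tprod_eq_one_of_not_multipliable hmul]
  refine tprod_le_one_of_abs_le_one fun i => ?_
  obtain ⟨h₁, h₂⟩ := abs_lt.1 (hρ i)
  have h := abs_hadamardFactor_le (ρ := ρ i) (s := m) (t := 0) (by
    rw [zero_sub, abs_neg, abs_of_pos (a := (ρ i).re) (by linarith)]
    exact abs_le.2 ⟨by linarith, by linarith⟩)
  simpa using h

end HadamardProduct

theorem stmt_15_general (k : ℕ) (hk : 0 < k) (hke : Even k)
    (Λ : ℂ → ℂ) (hent : Differentiable ℂ Λ)
    (hreal : ∀ x : ℝ, (k : ℝ) / 2 ≤ x → (Λ x).im = 0 ∧ 0 ≤ (Λ x).re)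
    (hzeros : ∀ z : ℂ, Λ z = 0 → |z.re - (k : ℝ) / 2| < 1 / 2)
    (ι : Type) (ρ : ι → ℂ) (A : ℝ)
    (hρstrip : ∀ i, |(ρ i).re - (k : ℝ) / 2| < 1 / 2)
    (hHad : ∀ s : ℝ,
      (Λ s).re = Real.exp A * ∏' i : ι,
        (if (ρ i).im = 0 then (1 - s / (ρ i).re)
         else if 0 < (ρ i).im then ‖1 - (s : ℂ) / ρ i‖ ^ 2 else 1)) :
    MonotoneOn (fun x : ℝ => (Λ x).re) (Set.Ici ((k : ℝ) / 2 + 1 / 2)) ∧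
    (0 ≤ (Λ ((k : ℝ) / 2)).re ∧
      ∀ j : ℕ, (Λ ((k : ℝ) / 2 + j)).re ≤ (Λ ((k : ℝ) / 2 + j + 1)).re) := by
  set L : ℝ → ℝ := fun x => (Λ x).re with hL
  have hm : 1 ≤ (k : ℝ) / 2 := by
    obtain ⟨n, rfl⟩ := hke
    have : (1 : ℝ) ≤ n := by exact_mod_cast (show 1 ≤ n by omega)
    push_cast; linarith
  have hcont : Continuous L :=
    Complex.continuous_re.comp (hent.continuous.comp Complex.continuous_ofReal)
  have hpos : ∀ s : ℝ, (k : ℝ) / 2 + 1 / 2 ≤ s → 0 < L s := fun s hs => by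
    obtain ⟨him, hre⟩ := hreal s (by linarith)
    refine hre.lt_of_ne fun h => ?_
    have := abs_lt.1 (hzeros s (Complex.ext h.symm him))
    rw [Complex.ofReal_re] at this
    linarith
  have hray : MonotoneOn L (Ici ((k : ℝ) / 2 + 1 / 2)) :=
    monotoneOn_Ici_of_eq_exp_mul_tprod hcont.continuousOn (fun i => by
      obtain ⟨h₁, h₂⟩ := abs_lt.1 (hρstrip i); constructor <;> linarith) hHad hpos
  refine ⟨hray, by simpa using (hreal _ le_rfl).2, fun j => ?_⟩
  have hstep : L ((k : ℝ) / 2 + j) ≤ L ((k : ℝ) / 2 + j + 1) := by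
    rcases j with _ | j
    · simpa [hL] using le_add_one_of_eq_exp_mul_tprod hm hρstrip hHad (hpos _ (by linarith))
    · exact hray (mem_Ici.2 (by push_cast; linarith)) (mem_Ici.2 (by push_cast; linarith))
        (by linarith)
  simpa [hL] using hstep

/-- Lemma 2.2 of the paper: an entire function, real and nonnegative on the real ray
[k/2, ∞), with zeros in the strip |Re ρ − k/2| < 1/2 and admitting a Hadamard-type
factorization over its zeros for real arguments, is monotone nondecreasing on
[k/2 + 1/2, ∞) and satisfies 0 ≤ Λ(k/2) ≤ Λ(k/2 + 1) ≤ Λ(k/2 + 2) ≤ ⋯. -/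
theorem stmt_15 (k : ℕ) (hk : 0 < k) (hke : Even k)
    (Λ : ℂ → ℂ) (hent : Differentiable ℂ Λ)
    (hreal : ∀ x : ℝ, (k : ℝ) / 2 ≤ x → (Λ x).im = 0 ∧ 0 ≤ (Λ x).re)
    (hzeros : ∀ z : ℂ, Λ z = 0 → |z.re - (k : ℝ) / 2| < 1 / 2)
    (ι : Type) (ρ : ι → ℂ) (A : ℝ)
    (hρzero : ∀ i, Λ (ρ i) = 0)
    (hρstrip : ∀ i, |(ρ i).re - (k : ℝ) / 2| < 1 / 2)
    (hHad : ∀ s : ℝ,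
      (Λ s).re = Real.exp A * ∏' i : ι,
        (if (ρ i).im = 0 then (1 - s / (ρ i).re)
         else if 0 < (ρ i).im then ‖1 - (s : ℂ) / ρ i‖ ^ 2 else 1)) :
    MonotoneOn (fun x : ℝ => (Λ x).re) (Set.Ici ((k : ℝ) / 2 + 1 / 2)) ∧
    (0 ≤ (Λ ((k : ℝ) / 2)).re ∧
      ∀ j : ℕ, (Λ ((k : ℝ) / 2 + j)).re ≤ (Λ ((k : ℝ) / 2 + j + 1)).re) :=
  stmt_15_general k hk hke Λ hent hreal hzeros ι ρ A hρstrip hHad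
end

section
/- Let m ≥ 1 and let P(z) = z^m·Q(z) + e^{iθ}·Q*(z), where Q is a polynomial of degree m with Q(0) ≠ 0, all roots of Q lie strictly inside the open unit disk, θ ∈ ℝ, and Q*(z) = z^m·conj(Q)(1/z̄). Then P has no roots in the region |z| > 1. -/
/-!
Since `Q*(z) = z^m · conj (Q (1 / z̄))`, a zero of `P` with `|z| > 1` would force
`|Q z| = |Q (1 / z̄)|`. But inversion in the unit circle moves `z` strictly closer to every point
`ρ` of the open unit disk, because `|z - ρ|² - |1 - ρ z̄|² = (|z|² - 1)(1 - |ρ|²) > 0`; factoring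
`Q` over its roots then gives `|Q (1 / z̄)| < |Q z|`.
-/

open Polynomial ComplexConjugate

theorem Multiset.prod_map_lt_prod_map_of_nonneg_s19 {ι R : Type*} [CommSemiring R] [PartialOrder R]
    [IsStrictOrderedRing R] {s : Multiset ι} (hs : s ≠ 0) {f g : ι → R}
    (h0 : ∀ i ∈ s, 0 ≤ f i) (hfg : ∀ i ∈ s, f i < g i) :
    (s.map f).prod < (s.map g).prod := by
  induction s using Multiset.induction with
  | empty => exact absurd rfl hs
  | cons i t ih =>
    simp only [Multiset.map_cons, Multiset.prod_cons]
    simp only [Multiset.mem_cons, forall_eq_or_imp] at h0 hfg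
    rcases eq_or_ne t 0 with rfl | ht
    · simpa using hfg.1
    · exact mul_lt_mul'' hfg.1 (ih ht h0.2 hfg.2) h0.1
        (Multiset.prod_nonneg fun _ hx ↦ by
          obtain ⟨j, hj, rfl⟩ := Multiset.mem_map.mp hx
          exact h0.2 j hj)

theorem Polynomial.eval_reverse {K : Type*} [Field K] (f : K[X]) {x : K} (hx : x ≠ 0) :
    f.reverse.eval x = x ^ f.natDegree * f.eval x⁻¹ := by
  have : Invertible x⁻¹ := invertibleOfNonzero (inv_ne_zero hx)
  have h := eval₂_reverse_mul_pow (RingHom.id K) x⁻¹ f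
  rw [invOf_eq_inv, inv_inv, eval₂_id, eval₂_id] at h
  rw [← h, mul_left_comm, ← mul_pow, mul_inv_cancel₀ hx, one_pow, mul_one]

namespace Complex

theorem normSq_sub_eq_normSq_one_sub_mul_conj_add (z ρ : ℂ) :
    normSq (z - ρ) = normSq (1 - ρ * conj z) + (normSq z - 1) * (1 - normSq ρ) := by
  simp only [normSq_apply, sub_re, sub_im, mul_re, mul_im, one_re, one_im, conj_re, conj_im]
  ring

theorem norm_one_sub_mul_conj_lt_norm_sub {z ρ : ℂ} (hρ : ‖ρ‖ < 1) (hz : 1 < ‖z‖) :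
    ‖1 - ρ * conj z‖ < ‖z - ρ‖ := by
  have h := normSq_sub_eq_normSq_one_sub_mul_conj_add z ρ
  simp only [normSq_eq_norm_sq] at h
  have hpos : 0 < (‖z‖ ^ 2 - 1) * (1 - ‖ρ‖ ^ 2) := by
    apply mul_pos <;> nlinarith [norm_nonneg ρ]
  nlinarith [norm_nonneg (1 - ρ * conj z), norm_nonneg (z - ρ)]

theorem norm_inv_conj_sub_lt_norm_sub {z ρ : ℂ} (hρ : ‖ρ‖ < 1) (hz : 1 < ‖z‖) :
    ‖(conj z)⁻¹ - ρ‖ < ‖z - ρ‖ := by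
  have hz0 : conj z ≠ 0 := by
    simpa using norm_pos_iff.mp (one_pos.trans hz)
  calc ‖(conj z)⁻¹ - ρ‖ = ‖1 - ρ * conj z‖ / ‖z‖ := by
        rw [← norm_conj z, ← norm_div, sub_div, one_div, mul_div_cancel_right₀ _ hz0]
    _ ≤ ‖1 - ρ * conj z‖ := div_le_self (norm_nonneg _) hz.le
    _ < ‖z - ρ‖ := norm_one_sub_mul_conj_lt_norm_sub hρ hz

end Complex

theorem Polynomial.norm_eval_inv_conj_lt_norm_eval {Q : ℂ[X]} (hQ : 0 < Q.natDegree)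
    (hroots : ∀ ρ : ℂ, Q.eval ρ = 0 → ‖ρ‖ < 1) {z : ℂ} (hz : 1 < ‖z‖) :
    ‖Q.eval (conj z)⁻¹‖ < ‖Q.eval z‖ := by
  have hQ0 : Q ≠ 0 := ne_zero_of_natDegree_gt hQ
  have hsplit : Q.Splits := IsAlgClosed.splits Q
  have hne : Q.roots ≠ 0 := by
    rw [← Multiset.card_pos, IsAlgClosed.card_roots_eq_natDegree]; exact hQ
  have norm_prod_map (g : ℂ → ℂ) : ‖(Q.roots.map g).prod‖ = (Q.roots.map (‖g ·‖)).prod := by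
    rw [← normHom_apply, map_multiset_prod, Multiset.map_map]; rfl
  rw [hsplit.eval_eq_prod_roots, hsplit.eval_eq_prod_roots, norm_mul, norm_mul, norm_prod_map,
    norm_prod_map]
  refine mul_lt_mul_of_pos_left ?_ (norm_pos_iff.mpr (leadingCoeff_ne_zero.mpr hQ0))
  exact Multiset.prod_map_lt_prod_map_of_nonneg_s19 hne (fun _ _ ↦ norm_nonneg _)
    fun ρ hρ ↦ Complex.norm_inv_conj_sub_lt_norm_sub (hroots ρ (isRoot_of_mem_roots hρ)) hz

theorem Polynomial.eval_reverse_map_conj (Q : ℂ[X]) {z : ℂ} (hz : z ≠ 0) :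
    (Q.map (starRingEnd ℂ)).reverse.eval z = z ^ Q.natDegree * conj (Q.eval (conj z)⁻¹) := by
  rw [eval_reverse _ hz, natDegree_map, eval_map, ← map_inv₀, ← eval₂_at_apply, Complex.conj_conj]

theorem stmt_19_general (m : ℕ) (hm : 1 ≤ m) (Q : Polynomial ℂ) (hdeg : Q.natDegree = m)
    (hroots : ∀ z : ℂ, Q.eval z = 0 → ‖z‖ < 1) (θ : ℝ) :
    ∀ z : ℂ, 1 < ‖z‖ →
      z ^ m * Q.eval z +
        Complex.exp (θ * Complex.I) * ((Q.map (starRingEnd ℂ)).reverse).eval z ≠ 0 := by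
  intro z hz hP
  subst hdeg
  have hz0 : z ≠ 0 := norm_pos_iff.mp (one_pos.trans hz)
  have hnorm : ‖z ^ Q.natDegree * Q.eval z‖ = ‖z ^ Q.natDegree * conj (Q.eval (conj z)⁻¹)‖ := by
    rw [← eval_reverse_map_conj Q hz0, eq_neg_of_add_eq_zero_left hP, norm_neg, norm_mul,
      Complex.norm_exp_ofReal_mul_I, one_mul]
  rw [norm_mul, norm_mul, Complex.norm_conj] at hnorm
  exact (norm_eval_inv_conj_lt_norm_eval hm hroots hz).ne'
    (mul_left_cancel₀ (norm_ne_zero_iff.mpr (pow_ne_zero _ hz0)) hnorm)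

/-- If Q has degree m, Q(0) ≠ 0 and all roots strictly inside the unit disk, then
P(z) = z^m·Q(z) + e^{iθ}·Q*(z) has no roots in |z| > 1. -/
theorem stmt_19 (m : ℕ) (hm : 1 ≤ m) (Q : Polynomial ℂ) (hdeg : Q.natDegree = m)
    (h0 : Q.coeff 0 ≠ 0) (hroots : ∀ z : ℂ, Q.eval z = 0 → ‖z‖ < 1) (θ : ℝ) :
    ∀ z : ℂ, 1 < ‖z‖ →
      z ^ m * Q.eval z +
        Complex.exp (θ * Complex.I) * ((Q.map (starRingEnd ℂ)).reverse).eval z ≠ 0 :=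
  stmt_19_general m hm Q hdeg hroots θ
end
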